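/- Let φ, ψ : S^{d-1} → ℝ be continuous functions such that G_φ and G_ψ have nonempty interiors, and suppose there are R > r > 0 and a ∈ ℝ^d with B(a,r) ⊆ G_φ ⊆ B(a,R). Let η = max over u ∈ S^{d-1} of |ψ(u) − φ(u)|. If η < r, then d_H(G_ψ, G_φ) ≤ (η·R/r)·(1 + η/r)/(1 − η/r). -/

import Mathlib

open Metric Set Classical
open scoped RealInnerProductSpace

noncomputable section

abbrev Euc (d : ℕ) := EuclideanSpace ℝ (Fin d)

/-- The support function of a set `G`: `h_G(u) = sup {⟨u,x⟩ : x ∈ G}`. -/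
def suppFn {d : ℕ} (G : Set (Euc d)) (u : Euc d) : ℝ :=
  sSup ((fun x => ⟪u, x⟫) '' G)

/-- The positively homogeneous extension of a function defined (at least) on the unit sphere. -/

def homExt {d : ℕ} (φ : Euc d → ℝ) (v : Euc d) : ℝ :=
  if v = 0 then 0 else ‖v‖ * φ (‖v‖⁻¹ • v)

/-- `φ` is subadditive: its positively homogeneous extension is convex on `ℝ^d`. -/
def IsSubadditiveFn {d : ℕ} (φ : Euc d → ℝ) : Prop :=
  ConvexOn ℝ Set.univ (homExt φ)

/-- The convex set defined by the affine constraints `⟨u,x⟩ ≤ φ(u)` for all `u ∈ S^{d-1}`. -/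
def Gphi {d : ℕ} (φ : Euc d → ℝ) : Set (Euc d) :=
  {x | ∀ u ∈ sphere (0 : Euc d) 1, ⟪u, x⟫ ≤ φ u}

/-- Stability of the polyhedral representation: if `ψ` is uniformly `η`-close to `φ` on the
sphere, with `η < r`, then `G_ψ` is Hausdorff-close to `G_φ`. -/
theorem hausdorff_stability_Gphi (d : ℕ) (φ ψ : Euc d → ℝ)
    (hφc : ContinuousOn φ (sphere (0 : Euc d) 1))
    (hψc : ContinuousOn ψ (sphere (0 : Euc d) 1))
    (hφint : (interior (Gphi φ)).Nonempty) (hψint : (interior (Gphi ψ)).Nonempty)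
    (r R : ℝ) (hr : 0 < r) (hrR : r < R) (a : Euc d)
    (hin : closedBall a r ⊆ Gphi φ) (hout : Gphi φ ⊆ closedBall a R)
    (η : ℝ) (hη : η = ⨆ u : sphere (0 : Euc d) 1, |ψ u - φ u|) (hηr : η < r) :
    hausdorffDist (Gphi ψ) (Gphi φ) ≤ η * R / r * ((1 + η / r) / (1 - η / r)) := by

  have hη0 : 0 ≤ η := hη ▸ Real.iSup_nonneg fun u => abs_nonneg _
  have hbdd : BddAbove (Set.range fun u : sphere (0:Euc d) 1 => |ψ u.1 - φ u.1|) := by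
    simpa [Set.image_eq_range] using
      (isCompact_sphere (0:Euc d) 1).bddAbove_image ((hψc.sub hφc).abs)
  have hηb : ∀ u ∈ sphere (0:Euc d) 1, |ψ u - φ u| ≤ η := by
    intro u hu
    rw [hη]
    exact le_ciSup hbdd ⟨u, hu⟩
  have hru : ∀ u ∈ sphere (0:Euc d) 1, ⟪u, a⟫ + r ≤ φ u := by
    intro u hu
    have hun : ‖u‖ = 1 := mem_sphere_zero_iff_norm.mp hu
    have hmem : a + r • u ∈ Gphi φ := hin (by
      simp [mem_closedBall, dist_eq_norm, norm_smul, hun, abs_of_nonneg hr.le])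
    have h := hmem u hu
    rw [inner_add_right, real_inner_smul_self_right, hun] at h
    linarith
  set ε := η * R / r with hε
  have hε0 : 0 ≤ ε := div_nonneg (mul_nonneg hη0 (by linarith)) hr.le
  have hrη : (0:ℝ) < r + η := by linarith
  have hA : ∀ x ∈ Gphi ψ, ∃ y ∈ Gphi φ, dist x y ≤ ε := by
    intro x hx
    set l := r / (r + η) with hl
    have hl0 : 0 < l := div_pos hr hrη
    have hl1 : l ≤ 1 := by rw [hl, div_le_one hrη]; linarith
    have hy : a + l • (x - a) ∈ Gphi φ := by
      intro u hu
      have h1 : ⟪u, x⟫ ≤ φ u + η := by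
        have h2 := (abs_le.mp (hηb u hu)).2
        have h3 := hx u hu
        linarith
      have h3 := hru u hu
      rw [inner_add_right, real_inner_smul_right, inner_sub_right]
      have key : l * ((r + η)) = r := by rw [hl]; exact div_mul_cancel₀ r hrη.ne'
      nlinarith [mul_le_mul_of_nonneg_left (show ⟪u,x⟫ - ⟪u,a⟫ ≤ (φ u - ⟪u,a⟫) + η by linarith) hl0.le,
        mul_le_mul_of_nonneg_right (show l ≤ 1 from hl1) (show (0:ℝ) ≤ (φ u - ⟪u,a⟫) - r by linarith)]
    refine ⟨a + l • (x - a), hy, ?_⟩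
    have hyR : ‖l • (x - a)‖ ≤ R := by
      have h := hout hy
      rw [mem_closedBall, dist_eq_norm] at h
      simpa using h
    have h5 : l * ‖x - a‖ ≤ R := by
      rwa [norm_smul, Real.norm_eq_abs, abs_of_pos hl0] at hyR
    have h6 : r * ‖x - a‖ ≤ R * (r + η) := by
      rw [hl, div_mul_eq_mul_div, div_le_iff₀ hrη] at h5
      linarith
    have hd : dist x (a + l • (x - a)) = (1 - l) * ‖x - a‖ := by
      rw [dist_eq_norm]
      have : x - (a + l • (x - a)) = (1 - l) • (x - a) := by module
      rw [this, norm_smul, Real.norm_eq_abs, abs_of_nonneg (by linarith)]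
    rw [hd]
    have h1l : 1 - l = η / (r + η) := by rw [hl]; field_simp; ring
    rw [h1l, hε, div_mul_eq_mul_div, div_le_div_iff₀ hrη hr]
    nlinarith [mul_le_mul_of_nonneg_left h6 hη0]
  have hB : ∀ x ∈ Gphi φ, ∃ y ∈ Gphi ψ, dist x y ≤ ε := by
    intro x hx
    set m := (r - η) / r with hm
    have hrη' : (0:ℝ) < r - η := by linarith
    have hm0 : 0 < m := div_pos hrη' hr
    have hm1 : m ≤ 1 := by rw [hm, div_le_one hr]; linarith
    have hψu : ∀ u ∈ sphere (0:Euc d) 1, ⟪u, a⟫ + (r - η) ≤ ψ u := by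
      intro u hu
      have h2 := (abs_le.mp (hηb u hu)).1
      have h3 := hru u hu
      linarith
    have hy : a + m • (x - a) ∈ Gphi ψ := by
      intro u hu
      have h1 : ⟪u, x⟫ ≤ ψ u + η := by
        have h2 := (abs_le.mp (hηb u hu)).1
        have h3 := hx u hu
        linarith
      have h3 := hψu u hu
      rw [inner_add_right, real_inner_smul_right, inner_sub_right]
      have key2 : m * ((ψ u - ⟪u,a⟫) + η) ≤ ψ u - ⟪u,a⟫ := by
        rw [hm, div_mul_eq_mul_div, div_le_iff₀ hr]
        nlinarith [mul_nonneg hη0 (show (0:ℝ) ≤ (ψ u - ⟪u,a⟫) - (r - η) by linarith)]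
      nlinarith [mul_le_mul_of_nonneg_left (show ⟪u,x⟫ - ⟪u,a⟫ ≤ (ψ u - ⟪u,a⟫) + η by linarith) hm0.le]
    refine ⟨a + m • (x - a), hy, ?_⟩
    have hxa : ‖x - a‖ ≤ R := by
      have h := hout hx
      rwa [mem_closedBall, dist_eq_norm] at h
    have hd : dist x (a + m • (x - a)) = (1 - m) * ‖x - a‖ := by
      rw [dist_eq_norm]
      have : x - (a + m • (x - a)) = (1 - m) • (x - a) := by module
      rw [this, norm_smul, Real.norm_eq_abs, abs_of_nonneg (by linarith)]
    rw [hd]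
    have h1m : 1 - m = η / r := by rw [hm]; field_simp; ring
    rw [h1m, hε, div_mul_eq_mul_div, mul_div_assoc, mul_div_assoc]
    gcongr
  have hH := hausdorffDist_le_of_mem_dist hε0 hA hB
  refine hH.trans ?_
  have h1 : (0:ℝ) < 1 - η / r := by rw [sub_pos, div_lt_one hr]; exact hηr
  have h2 : 1 ≤ (1 + η / r) / (1 - η / r) := by
    rw [le_div_iff₀ h1]
    have : 0 ≤ η / r := by positivity
    linarith
  calc ε = ε * 1 := (mul_one ε).symm
    _ ≤ ε * ((1 + η / r) / (1 - η / r)) := mul_le_mul_of_nonneg_left h2 hε0
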